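/- arXiv:2410.20188 — 2 statements merged into one kernel-verified Lean document; each statement's English description precedes it below -/
import Mathlib

section
/- Let M be a module over the ring C⁰(ℤ_p,𝔽_p) of continuous functions ℤ_p → 𝔽_p. Assume there are pairwise distinct p-adic integers x₁,…,x_n and submodules M'₁,…,M'_n such that M is the internal direct sum of M'₁,…,M'_n, and 0 ≠ M'_i ⊆ M_(x_i) for every i. Then M'_i = M_(x_i) and M'_i ≅ M_{x_i} for every i. -/
/-- `𝔽_p = ZMod p` carries the discrete topology. -/
instance (p : ℕ) : TopologicalSpace (ZMod p) := ⊥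

instance (p : ℕ) : DiscreteTopology (ZMod p) := ⟨rfl⟩

/-- For `x ∈ ℤ_p`, the maximal ideal `𝓘(x) = {F ∈ C⁰(ℤ_p, 𝔽_p) : F(x) = 0}` of the
ring of continuous functions `ℤ_p → 𝔽_p`. -/
noncomputable def evalIdeal (p : ℕ) [Fact p.Prime] (x : PadicInt p) : Ideal C(PadicInt p, ZMod p) :=
  RingHom.ker ((Pi.evalRingHom (fun _ : PadicInt p => ZMod p) x).comp
    (ContinuousMap.coeFnRingHom))

/-- `M_(x) = {u ∈ M : 𝓘(x)·u = 0}`, a submodule of `M`. -/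
def eigenSubmodule (p : ℕ) [Fact p.Prime]
    (M : Type*) [AddCommGroup M] [Module C(PadicInt p, ZMod p) M] (x : PadicInt p) :
    Submodule C(PadicInt p, ZMod p) M where
  carrier := {u | ∀ F ∈ evalIdeal p x, F • u = 0}
  add_mem' := by
    intro u v hu hv F hF
    rw [smul_add, hu F hF, hv F hF, add_zero]
  zero_mem' := by intro F _; exact smul_zero F
  smul_mem' := by
    intro c u hu F hF
    rw [smul_comm, hu F hF, smul_zero]

/-!
The evaluation ideals `𝓘(x)` at distinct points are pairwise coprime, because `ℤ_p` is totally
separated: the characteristic function of a clopen set containing `x` but not `y` lies in `𝓘(y)`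
and is `1` modulo `𝓘(x)`. For pairwise coprime ideals `Iᵢ` the torsion submodules `M[Iᵢ]` are
independent, so from `M = ⨁ M'ᵢ` with `M'ᵢ ≤ M[Iᵢ]` one gets `M'ᵢ = M[Iᵢ]`. Moreover `Iᵢ M'ᵢ = 0`
and `Iᵢ M'ⱼ = (Iᵢ + Iⱼ) M'ⱼ = M'ⱼ` for `j ≠ i`, so `Iᵢ M = ⨁_{j ≠ i} M'ⱼ` and `M / Iᵢ M ≅ M'ᵢ`.
-/

open Submodule

theorem ContinuousMap.exists_apply_eq_one_apply_eq_zero {X Y : Type*} [TopologicalSpace X]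
    [TotallySeparatedSpace X] [TopologicalSpace Y] [MulZeroOneClass Y] {x y : X} (hxy : x ≠ y) :
    ∃ F : C(X, Y), F x = 1 ∧ F y = 0 := by
  obtain ⟨U, hU, hxU, hyU⟩ := exists_isClopen_of_totally_separated hxy
  refine ⟨LocallyConstant.charFn Y hU, ?_, ?_⟩ <;>
    simp_all [LocallyConstant.coe_charFn]

section Torsion

variable {R M ι : Type*} [CommRing R] [AddCommGroup M] [Module R M]

theorem Submodule.ideal_smul_eq_bot_of_le_torsionBySet {I : Ideal R} {N : Submodule R M}
    (hN : N ≤ torsionBySet R M I) : I • N = ⊥ :=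
  eq_bot_iff.2 <| smul_le.2 fun r hr _ hn =>
    (mem_torsionBySet_iff _ _).1 (hN hn) ⟨r, hr⟩

theorem Submodule.ideal_smul_eq_self_of_le_torsionBySet {I J : Ideal R} {N : Submodule R M}
    (hIJ : I ⊔ J = ⊤) (hN : N ≤ torsionBySet R M J) : I • N = N := by
  conv_rhs => rw [← top_smul N, ← hIJ, sup_smul, ideal_smul_eq_bot_of_le_torsionBySet hN,
    sup_bot_eq]

variable {I : ι → Ideal R} {N : ι → Submodule R M}

theorem Submodule.eq_torsionBySet_of_iSup_eq_top [Fintype ι]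
    (hI : Pairwise fun i j => I i ⊔ I j = ⊤) (htop : iSup N = ⊤)
    (hle : ∀ i, N i ≤ torsionBySet R M (I i)) (i : ι) : N i = torsionBySet R M (I i) := by
  have hindep : iSupIndep fun i => torsionBySet R M (I i) :=
    (supIndep_torsionBySet_ideal (S := Finset.univ) fun _ _ _ _ hij => hI hij).iSupIndep_of_univ
  exact congrFun ((hindep.le_iff_eq_of_iSup_eq_top htop).1 hle) i

theorem Submodule.ideal_smul_top_eq_iSup_ne
    (hI : Pairwise fun i j => I i ⊔ I j = ⊤) (htop : iSup N = ⊤)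
    (hle : ∀ i, N i ≤ torsionBySet R M (I i)) (i : ι) :
    I i • (⊤ : Submodule R M) = ⨆ (j) (_ : j ≠ i), N j := by
  rw [← htop, iSup_split_single N i, smul_sup, ideal_smul_eq_bot_of_le_torsionBySet (hle i),
    bot_sup_eq, smul_iSup]
  refine iSup_congr fun j => ?_
  rw [smul_iSup]
  exact iSup_congr fun hji => ideal_smul_eq_self_of_le_torsionBySet (hI hji.symm) (hle j)

end Torsion

theorem DirectSum.IsInternal.isCompl_iSup_ne {R M ι : Type*} [Ring R] [AddCommGroup M]
    [Module R M] [DecidableEq ι] {N : ι → Submodule R M} (hN : DirectSum.IsInternal N) (i : ι) :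
    IsCompl (N i) (⨆ (j) (_ : j ≠ i), N j) :=
  ⟨hN.submodule_iSupIndep i, codisjoint_iff.2 <| by
    rw [← iSup_split_single N i, hN.submodule_iSup_eq_top]⟩

section Padic

variable {p : ℕ} [Fact p.Prime]

theorem mem_evalIdeal_iff {x : PadicInt p} {F : C(PadicInt p, ZMod p)} :
    F ∈ evalIdeal p x ↔ F x = 0 :=
  Iff.rfl

theorem evalIdeal_sup_evalIdeal_of_ne {x y : PadicInt p} (hxy : x ≠ y) :
    evalIdeal p x ⊔ evalIdeal p y = ⊤ := by
  obtain ⟨F, hFx, hFy⟩ := ContinuousMap.exists_apply_eq_one_apply_eq_zero (Y := ZMod p) hxy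
  rw [Ideal.eq_top_iff_one, ← sub_add_cancel 1 F]
  refine add_mem_sup ?_ (mem_evalIdeal_iff.2 hFy)
  simp [mem_evalIdeal_iff, hFx]

theorem eigenSubmodule_eq_torsionBySet (M : Type*) [AddCommGroup M]
    [Module C(PadicInt p, ZMod p) M] (x : PadicInt p) :
    eigenSubmodule p M x = torsionBySet C(PadicInt p, ZMod p) M (evalIdeal p x) := by
  ext u
  simp [eigenSubmodule, mem_torsionBySet_iff]

end Padic

theorem eq_eigenSubmodule_of_internal_general (p : ℕ) [Fact p.Prime]
    (M : Type*) [AddCommGroup M] [Module C(PadicInt p, ZMod p) M]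
    (n : ℕ) (x : Fin n → PadicInt p) (hx : Function.Injective x)
    (M' : Fin n → Submodule C(PadicInt p, ZMod p) M)
    (hMint : DirectSum.IsInternal M')
    (hle : ∀ i, M' i ≤ eigenSubmodule p M (x i)) :
    ∀ i, M' i = eigenSubmodule p M (x i) ∧
      Nonempty ((M' i) ≃ₗ[C(PadicInt p, ZMod p)]
        (M ⧸ (evalIdeal p (x i) • (⊤ : Submodule C(PadicInt p, ZMod p) M)))) := by
  intro i
  have hcop : Pairwise fun i j => evalIdeal p (x i) ⊔ evalIdeal p (x j) = ⊤ :=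
    fun _ _ hij => evalIdeal_sup_evalIdeal_of_ne (hx.ne hij)
  have htop := hMint.submodule_iSup_eq_top
  simp only [eigenSubmodule_eq_torsionBySet] at hle ⊢
  refine ⟨eq_torsionBySet_of_iSup_eq_top hcop htop hle i, ⟨?_⟩⟩
  rw [ideal_smul_top_eq_iSup_ne hcop htop hle i]
  exact (quotientEquivOfIsCompl _ _ (hMint.isCompl_iSup_ne i).symm).symm

/-- Let `M` be a module over `C⁰(ℤ_p, 𝔽_p)`. Assume there are pairwise
distinct p-adic integers `x₁,…,xₙ` and submodules `M'₁,…,M'ₙ` such that `M` is the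
internal direct sum of `M'₁,…,M'ₙ`, and `0 ≠ M'ᵢ ⊆ M_(xᵢ)` for every `i`. Then
`M'ᵢ = M_(xᵢ)` and `M'ᵢ ≅ M_{xᵢ}` for every `i`. -/
theorem eq_eigenSubmodule_of_internal (p : ℕ) [Fact p.Prime]
    (M : Type*) [AddCommGroup M] [Module C(PadicInt p, ZMod p) M]
    (n : ℕ) (x : Fin n → PadicInt p) (hx : Function.Injective x)
    (M' : Fin n → Submodule C(PadicInt p, ZMod p) M)
    (hMint : DirectSum.IsInternal M')
    (hne : ∀ i, M' i ≠ ⊥)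
    (hle : ∀ i, M' i ≤ eigenSubmodule p M (x i)) :
    ∀ i, M' i = eigenSubmodule p M (x i) ∧
      Nonempty ((M' i) ≃ₗ[C(PadicInt p, ZMod p)]
        (M ⧸ (evalIdeal p (x i) • (⊤ : Submodule C(PadicInt p, ZMod p) M)))) :=
  eq_eigenSubmodule_of_internal_general p M n x hx M' hMint hle
end

section
/- Let K be a perfect field of characteristic p and R = K[x₁,…,x_n]. Let I = ⟨f₁+g₁,…,f_m+g_m, h₁,…,h_l⟩ and I₀ = ⟨f₁,…,f_m⟩ be ideals contained in 𝔪, where each f_i is nonzero and weighted homogeneous of type (w,d₀) (all of the same weighted degree d₀), I₀ is 𝔪-primary, wmd(g_i) > d₀ for every nonzero g_i, and wmd(h_j) > d₀ for every nonzero h_j. Then for every a ∈ (ℕ⁺)ⁿ one has c^{𝔪(a)}(I) = c^{𝔪(a)}(I₀) = w(a)/d₀. -/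
open Filter

/-- The Frobenius power `I^{[p^e]}`. -/
def frobeniusPower (p e : ℕ) {R : Type*} [CommRing R] (I : Ideal R) : Ideal R :=
  Ideal.span ((fun f => f ^ p ^ e) '' (I : Set R))

/-- The ν-invariant `ν^𝔞_I(p^e) = max {n ∈ ℕ : Iⁿ ⊄ 𝔞^{[p^e]}}`. -/
noncomputable def nuInv (p : ℕ) {R : Type*} [CommRing R] (𝔞 I : Ideal R) (e : ℕ) : ℕ :=
  sSup {n : ℕ | ¬ I ^ n ≤ frobeniusPower p e 𝔞}

/-- Weighted degree of an exponent vector: `w(a) = Σ wᵢ aᵢ`. -/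
def wdeg {n : ℕ} (w : Fin n → ℕ) (a : Fin n →₀ ℕ) : ℕ := ∑ i, w i * a i

/-- `wmd f = min {w(a) : a ∈ Supp f}`. -/
noncomputable def wmd {n : ℕ} {K : Type*} [CommSemiring K] (w : Fin n → ℕ)
    (f : MvPolynomial (Fin n) K) : ℕ :=
  sInf (wdeg w '' (f.support : Set (Fin n →₀ ℕ)))

/-- The monomial ideal `𝔪(a) = ⟨x₁^{a₁},…,xₙ^{aₙ}⟩`. -/
noncomputable def mIdeal {n : ℕ} (K : Type*) [CommSemiring K] (a : Fin n → ℕ) :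
    Ideal (MvPolynomial (Fin n) K) :=
  Ideal.span (Set.range fun i : Fin n => MvPolynomial.X i ^ a i)

/-- The maximal ideal `𝔪 = ⟨x₁,…,xₙ⟩`. -/
noncomputable def mMax {n : ℕ} (K : Type*) [CommSemiring K] : Ideal (MvPolynomial (Fin n) K) :=
  Ideal.span (Set.range (MvPolynomial.X : Fin n → MvPolynomial (Fin n) K))

/-!
Give the monomial `x^b` the weight `w(b)` and let `q = p^e`. The monomials outside
`𝔪(a)^{[q]}` are those with `bᵢ < q aᵢ`; they have weight at most `q w(a)`, and the corner
`bᵢ = q aᵢ - 1` has weight exactly `q w(a) - Σ wᵢ`. Every generator of `I` and `I₀` has weighted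
order at least `d₀`, so an element of `Iᴺ` has order at least `N d₀`, and `Iᴺ ⊄ 𝔪(a)^{[q]}`
forces `N d₀ ≤ q w(a)`.

Conversely, `I₀` is `𝔪`-primary, so it contains every polynomial of weight at least some `D`.
A weighted homogeneous `F` of weight `t ≥ D` is then `Σ ρᵢ fᵢ` with `ρᵢ` weighted homogeneous of
weight `t - d₀`. Inducting on `N`, we get an element of `Iᴺ` with leading form `F`
whenever `t ≥ D + (N - 1) d₀`: replacing `fᵢ` by `fᵢ + gᵢ` only adds terms of larger weight.
Applying this to the corner monomial gives `d₀ ν(q) ≥ q w(a) - O(1)`, so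
`ν(q) / q → w(a) / d₀`.
-/

open MvPolynomial Topology

namespace Finsupp

variable {σ : Type*} {w : σ → ℕ}

theorem weight_mono : Monotone (weight w : (σ →₀ ℕ) → ℕ) := fun a b hab => by
  obtain ⟨c, rfl⟩ := le_iff_exists_add.mp hab
  rw [map_add]
  exact Nat.le_add_right _ _

theorem degree_le_weight (hw : ∀ i, 0 < w i) (d : σ →₀ ℕ) : d.degree ≤ weight w d := by
  rw [weight_apply, degree_apply, Finsupp.sum]
  exact Finset.sum_le_sum fun i _ => Nat.le_mul_of_pos_right _ (hw i)

theorem weight_le_mul_degree {W : ℕ} (hW : ∀ i, w i ≤ W) (d : σ →₀ ℕ) :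
    weight w d ≤ W * d.degree := by
  rw [weight_apply, degree_apply, Finset.mul_sum, Finsupp.sum]
  exact Finset.sum_le_sum fun i _ => by
    rw [smul_eq_mul, mul_comm]
    exact Nat.mul_le_mul_right _ (hW i)

end Finsupp

namespace MvPolynomial

section CommSemiring

variable {σ R : Type*} [CommSemiring R]

variable (R) in
noncomputable def weightedOrderIdeal (w : σ → ℕ) (t : ℕ) : Ideal (MvPolynomial σ R) :=
  restrictSupportIdeal R {d | t ≤ Finsupp.weight w d}
    fun _ _ hab ht => ht.trans (Finsupp.weight_mono hab)

variable {w : σ → ℕ} {s t : ℕ} {F G : MvPolynomial σ R}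

theorem mem_weightedOrderIdeal :
    F ∈ weightedOrderIdeal R w t ↔ ∀ d ∈ F.support, t ≤ Finsupp.weight w d :=
  mem_restrictSupport_iff R

theorem coeff_eq_zero_of_mem_weightedOrderIdeal (hF : F ∈ weightedOrderIdeal R w t)
    {d : σ →₀ ℕ} (hd : Finsupp.weight w d < t) : coeff d F = 0 :=
  notMem_support_iff.mp fun h => (mem_weightedOrderIdeal.mp hF d h).not_gt hd

theorem weightedOrderIdeal_antitone : Antitone (weightedOrderIdeal R w) := fun _ _ hst _ hF =>
  mem_weightedOrderIdeal.mpr fun d hd => hst.trans (mem_weightedOrderIdeal.mp hF d hd)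

theorem mul_mem_weightedOrderIdeal (hF : F ∈ weightedOrderIdeal R w s)
    (hG : G ∈ weightedOrderIdeal R w t) : F * G ∈ weightedOrderIdeal R w (s + t) := by
  classical
  refine mem_weightedOrderIdeal.mpr fun d hd => ?_
  obtain ⟨u, hu, v, hv, rfl⟩ := Finset.mem_add.mp (support_mul F G hd)
  rw [map_add]
  exact add_le_add (mem_weightedOrderIdeal.mp hF u hu) (mem_weightedOrderIdeal.mp hG v hv)

theorem pow_le_weightedOrderIdeal {J : Ideal (MvPolynomial σ R)}
    (hJ : J ≤ weightedOrderIdeal R w t) (N : ℕ) : J ^ N ≤ weightedOrderIdeal R w (N * t) := by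
  induction N with
  | zero => exact fun F _ => mem_weightedOrderIdeal.mpr fun _ _ => by simp
  | succ N ih =>
    rw [pow_succ, Ideal.mul_le, add_mul, one_mul]
    exact fun F hF G hG => mul_mem_weightedOrderIdeal (ih hF) (hJ hG)

theorem weightedOrderIdeal_le_pow_idealOfVars {W : ℕ} (hW : ∀ i, w i ≤ W) (hW0 : 0 < W)
    (k : ℕ) : weightedOrderIdeal R w (k * W) ≤ idealOfVars σ R ^ k := fun F hF =>
  (mem_pow_idealOfVars_iff k F).mpr fun d hd => by
    have h := (mem_weightedOrderIdeal.mp hF d hd).trans (Finsupp.weight_le_mul_degree hW d)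
    rw [mul_comm] at h
    exact Nat.le_of_mul_le_mul_left h hW0

theorem IsWeightedHomogeneous.mem_weightedOrderIdeal (hF : IsWeightedHomogeneous w F t) :
    F ∈ weightedOrderIdeal R w t :=
  MvPolynomial.mem_weightedOrderIdeal.mpr fun _ hd => (hF (mem_support_iff.mp hd)).ge

theorem IsWeightedHomogeneous.pos_of_mem_idealOfVars (hw : ∀ i, 0 < w i)
    (hF : IsWeightedHomogeneous w F t) (hF0 : F ≠ 0) (hFm : F ∈ idealOfVars σ R) : 0 < t := by
  obtain ⟨d, hd⟩ := support_nonempty.mpr hF0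
  have hdeg : 1 ≤ d.degree := (mem_pow_idealOfVars_iff 1 F).mp (by rwa [pow_one]) d hd
  rw [← hF (mem_support_iff.mp hd)]
  exact hdeg.trans (Finsupp.degree_le_weight hw d)

theorem weightedHomogeneousComponent_mul_of_isWeightedHomogeneous {f : MvPolynomial σ R}
    {d : ℕ} (hf : IsWeightedHomogeneous w f d) (hdt : d ≤ t) (r : MvPolynomial σ R) :
    weightedHomogeneousComponent w t (r * f) = weightedHomogeneousComponent w (t - d) r * f := by
  induction r using MvPolynomial.induction_on' with
  | monomial u c =>
    have hu := isWeightedHomogeneous_monomial w u c rfl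
    have huf := hu.mul hf
    by_cases h : Finsupp.weight w u = t - d
    · rw [h, Nat.sub_add_cancel hdt] at huf
      rw [h] at hu
      rw [hu.weightedHomogeneousComponent_same, huf.weightedHomogeneousComponent_same]
    · rw [hu.weightedHomogeneousComponent_ne _ (Ne.symm h), zero_mul,
        huf.weightedHomogeneousComponent_ne _ (by omega)]
  | add r r' hr hr' => rw [add_mul, map_add, hr, hr', map_add, add_mul]

theorem exists_isWeightedHomogeneous_sum_mul_eq {ι : Type*} [Fintype ι]
    {f : ι → MvPolynomial σ R} {d : ℕ} (hf : ∀ i, IsWeightedHomogeneous w (f i) d) (hdt : d ≤ t)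
    (hF : IsWeightedHomogeneous w F t) (hFf : F ∈ Ideal.span (Set.range f)) :
    ∃ ρ : ι → MvPolynomial σ R,
      (∀ i, IsWeightedHomogeneous w (ρ i) (t - d)) ∧ ∑ i, ρ i * f i = F := by
  obtain ⟨r, hr⟩ := Ideal.mem_span_range_iff_exists_fun.mp hFf
  refine ⟨fun i => weightedHomogeneousComponent w (t - d) (r i),
    fun i => weightedHomogeneousComponent_isWeightedHomogeneous _ _, ?_⟩
  rw [← hF.weightedHomogeneousComponent_same, ← hr, map_sum]
  exact Finset.sum_congr rfl fun i _ =>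
    (weightedHomogeneousComponent_mul_of_isWeightedHomogeneous (hf i) hdt (r i)).symm

end CommSemiring

section CommRing

variable {σ R : Type*} [CommRing R] {w : σ → ℕ}

variable (w) in
/-- Up to terms of higher weight, `J ^ N` contains every weighted homogeneous polynomial of
weight `t ≥ D + (N - 1) d` (written `D + N d ≤ t + d` to avoid truncated subtraction). -/
def ApproximatesWeightedHomogeneous (d D : ℕ) (J : Ideal (MvPolynomial σ R)) : Prop :=
  ∀ N t (F : MvPolynomial σ R), IsWeightedHomogeneous w F t → D + N * d ≤ t + d →
    ∃ G ∈ J ^ N, G - F ∈ weightedOrderIdeal R w (t + 1)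

theorem ApproximatesWeightedHomogeneous.mono {d D : ℕ} {J J' : Ideal (MvPolynomial σ R)}
    (hJ : ApproximatesWeightedHomogeneous w d D J) (hJJ' : J ≤ J') :
    ApproximatesWeightedHomogeneous w d D J' := fun N t F hF hN => by
  obtain ⟨G, hG, hGF⟩ := hJ N t F hF hN
  exact ⟨G, Ideal.pow_right_mono hJJ' N hG, hGF⟩

theorem approximatesWeightedHomogeneous_span_add {ι : Type*} [Fintype ι]
    {f g : ι → MvPolynomial σ R} {d D : ℕ} (hDd : d ≤ D)
    (hf : ∀ i, IsWeightedHomogeneous w (f i) d) (hg : ∀ i, g i ∈ weightedOrderIdeal R w (d + 1))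
    (hD : weightedOrderIdeal R w D ≤ Ideal.span (Set.range f)) :
    ApproximatesWeightedHomogeneous w d D (Ideal.span (Set.range fun i => f i + g i)) := by
  intro N
  induction N with
  | zero => exact fun t F _ _ => ⟨F, by simp, by simp⟩
  | succ N ih =>
    intro t F hF hN
    have hNt : D + N * d ≤ t := by rw [add_mul, one_mul] at hN; omega
    have hDt : D ≤ t := le_of_add_le_left hNt
    obtain ⟨ρ, hρ, rfl⟩ := exists_isWeightedHomogeneous_sum_mul_eq hf (hDd.trans hDt) hF
      (hD (weightedOrderIdeal_antitone hDt hF.mem_weightedOrderIdeal))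
    choose σ' hσ' hσρ using fun i => ih (t - d) (ρ i) (hρ i) (by omega)
    refine ⟨∑ i, σ' i * (f i + g i), Ideal.sum_mem _ fun i _ => ?_, ?_⟩
    · rw [pow_succ]
      exact Ideal.mul_mem_mul (hσ' i) (Ideal.subset_span ⟨i, rfl⟩)
    have hfg : ∀ i, f i + g i ∈ weightedOrderIdeal R w d := fun i =>
      add_mem (hf i).mem_weightedOrderIdeal (weightedOrderIdeal_antitone d.le_succ (hg i))
    have hterm : ∀ i, σ' i * (f i + g i) - ρ i * f i ∈ weightedOrderIdeal R w (t + 1) := by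
      intro i
      rw [show σ' i * (f i + g i) - ρ i * f i = (σ' i - ρ i) * (f i + g i) + ρ i * g i by ring]
      refine add_mem ?_ ?_
      · simpa only [show t - d + 1 + d = t + 1 by omega] using
          mul_mem_weightedOrderIdeal (hσρ i) (hfg i)
      · simpa only [show t - d + (d + 1) = t + 1 by omega] using
          mul_mem_weightedOrderIdeal (hρ i).mem_weightedOrderIdeal (hg i)
    rw [← Finset.sum_sub_distrib]
    exact Ideal.sum_mem _ fun i _ => hterm i

theorem pos_of_radical_span_eq_idealOfVars [Nonempty σ] [IsDomain R]
    {ι : Type*} {f : ι → MvPolynomial σ R} {d : ℕ} (hw : ∀ i, 0 < w i)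
    (hf : ∀ i, IsWeightedHomogeneous w (f i) d)
    (hrad : (Ideal.span (Set.range f)).radical = idealOfVars σ R) : 0 < d := by
  obtain ⟨i, hi⟩ : ∃ i, f i ≠ 0 := by
    by_contra! hf0
    have hX : X (Classical.arbitrary σ) ∈ (Ideal.span (Set.range f)).radical :=
      hrad ▸ Ideal.subset_span ⟨_, rfl⟩
    rw [Ideal.span_eq_bot.mpr (by simpa [Set.forall_mem_range] using hf0),
      Ideal.radical_bot_of_isReduced, Ideal.mem_bot] at hX
    exact X_ne_zero _ hX
  exact (hf i).pos_of_mem_idealOfVars hw hi (hrad ▸ Ideal.le_radical (Ideal.subset_span ⟨i, rfl⟩))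

variable (w) in
theorem exists_weightedOrderIdeal_le_of_radical_eq [Finite σ] [IsNoetherianRing R]
    {J : Ideal (MvPolynomial σ R)} (hJ : J.radical = idealOfVars σ R) :
    ∃ D, weightedOrderIdeal R w D ≤ J := by
  have := Fintype.ofFinite σ
  obtain ⟨k, hk⟩ := Ideal.exists_radical_pow_le_of_fg J (IsNoetherian.noetherian _)
  have hW : ∀ i, w i ≤ ∑ j, w j + 1 := fun i =>
    (Finset.single_le_sum (fun j _ => Nat.zero_le (w j)) (Finset.mem_univ i)).trans (Nat.le_succ _)
  exact ⟨_, (weightedOrderIdeal_le_pow_idealOfVars hW (Nat.succ_pos _) k).trans (hJ ▸ hk)⟩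

end CommRing

end MvPolynomial

section NuInvariant

variable {R : Type*} [CommRing R] {p e : ℕ} {𝔞 I : Ideal R}

variable (p e) in
theorem frobeniusPower_span [ExpChar R p] (s : Set R) :
    frobeniusPower p e (Ideal.span s) = Ideal.span ((· ^ p ^ e) '' s) := by
  have h : (fun x : R => x ^ p ^ e) = iterateFrobenius R p e :=
    funext fun x => (iterateFrobenius_def p e x).symm
  rw [frobeniusPower, h]
  exact Ideal.map_span (iterateFrobenius R p e) s

theorem nuInv_le {B : ℕ} (h : ∀ x, ¬ I ^ x ≤ frobeniusPower p e 𝔞 → x ≤ B) :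
    nuInv p 𝔞 I e ≤ B :=
  csSup_le' h

theorem le_nuInv {B N : ℕ} (h : ∀ x, ¬ I ^ x ≤ frobeniusPower p e 𝔞 → x ≤ B)
    (hN : ¬ I ^ N ≤ frobeniusPower p e 𝔞) : N ≤ nuInv p 𝔞 I e :=
  le_csSup ⟨B, h⟩ hN

theorem nuInv_eq_zero_of_le (h : I ≤ frobeniusPower p e 𝔞) : nuInv p 𝔞 I e = 0 :=
  Nat.le_zero.mp <| nuInv_le fun x hx => Nat.le_zero.mpr <| by
    by_contra hx0
    exact hx ((Ideal.pow_le_self hx0).trans h)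

theorem eq_div_of_tendsto_of_mul_le {ν : ℕ → ℕ} {A d C : ℕ} (hp : 1 < p) (hd : 0 < d)
    (hub : ∀ e, d * ν e ≤ p ^ e * A) (hlb : ∀ e, p ^ e * A ≤ d * ν e + C) {c : ℝ}
    (hc : Tendsto (fun e => (ν e : ℝ) / p ^ e) atTop (𝓝 c)) : c = A / d := by
  have hq : ∀ e, (0 : ℝ) < p ^ e := fun e => by positivity
  have hd' : (0 : ℝ) < d := by exact_mod_cast hd
  have hlow : Tendsto (fun e => (A : ℝ) / d - C / d * ((p : ℝ)⁻¹) ^ e) atTop (𝓝 (A / d)) := by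
    simpa using tendsto_const_nhds.sub ((tendsto_pow_atTop_nhds_zero_of_lt_one (by positivity)
      (inv_lt_one_of_one_lt₀ (by exact_mod_cast hp))).const_mul ((C : ℝ) / d))
  refine tendsto_nhds_unique hc (tendsto_of_tendsto_of_tendsto_of_le_of_le hlow
    tendsto_const_nhds (fun e => ?_) fun e => ?_)
  · have h : (p : ℝ) ^ e * A ≤ d * ν e + C := by exact_mod_cast hlb e
    have hsplit : (A : ℝ) / d - C / d * ((p : ℝ)⁻¹) ^ e = (p ^ e * A - C) / (d * p ^ e) := by
      rw [inv_pow]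
      field_simp
    rw [hsplit, div_le_div_iff₀ (by positivity) (hq e)]
    nlinarith [hq e]
  · have h : (d : ℝ) * ν e ≤ p ^ e * A := by exact_mod_cast hub e
    rw [div_le_div_iff₀ (hq e) hd']
    linarith

end NuInvariant

section PolynomialRing

variable {n : ℕ} {K : Type*}

theorem wdeg_eq_weight (w : Fin n → ℕ) (b : Fin n →₀ ℕ) : wdeg w b = Finsupp.weight w b := by
  simp [wdeg, Finsupp.weight_eq_sum, mul_comm]

theorem mem_weightedOrderIdeal_of_le_wmd [CommSemiring K] {w : Fin n → ℕ} {t : ℕ}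
    {F : MvPolynomial (Fin n) K} (h : F ≠ 0 → t ≤ wmd w F) : F ∈ weightedOrderIdeal K w t := by
  rcases eq_or_ne F 0 with rfl | hF
  · exact zero_mem _
  refine mem_weightedOrderIdeal.mpr fun b hb => ?_
  rw [← wdeg_eq_weight]
  exact (h hF).trans (Nat.sInf_le ⟨b, hb, rfl⟩)

theorem mem_mIdeal_iff [CommSemiring K] {c : Fin n → ℕ} {F : MvPolynomial (Fin n) K} :
    F ∈ mIdeal K c ↔ ∀ b ∈ F.support, ∃ i, c i ≤ b i := by
  have h : Set.range (fun i : Fin n => (X i ^ c i : MvPolynomial (Fin n) K)) =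
      (fun s => monomial s 1) '' Set.range fun i => Finsupp.single i (c i) := by
    rw [← Set.range_comp]
    simp only [Function.comp_def, X_pow_eq_monomial]
  rw [mIdeal, h, mem_ideal_span_monomial_image]
  simp [Finsupp.single_le_iff]

theorem notMem_mIdeal_of_coeff_ne_zero [CommSemiring K] {c : Fin n → ℕ}
    {F : MvPolynomial (Fin n) K} {b : Fin n →₀ ℕ} (hF : coeff b F ≠ 0) (hb : ∀ i, b i < c i) :
    F ∉ mIdeal K c := fun h => by
  obtain ⟨i, hi⟩ := mem_mIdeal_iff.mp h b (mem_support_iff.mpr hF)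
  exact (hb i).not_ge hi

theorem frobeniusPower_mIdeal [CommRing K] (p e : ℕ) [ExpChar K p] (a : Fin n → ℕ) :
    frobeniusPower p e (mIdeal K a) = mIdeal K (fun i => a i * p ^ e) := by
  rw [mIdeal, frobeniusPower_span, ← Set.range_comp]
  simp only [Function.comp_def, ← pow_mul]
  rfl

variable [CommRing K] {p : ℕ} [ExpChar K p] {w : Fin n → ℕ}

theorem mul_le_of_not_pow_le_frobeniusPower_mIdeal {d x e : ℕ} {a : Fin n → ℕ}
    {J : Ideal (MvPolynomial (Fin n) K)} (hJ : J ≤ weightedOrderIdeal K w d)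
    (hx : ¬ J ^ x ≤ frobeniusPower p e (mIdeal K a)) : x * d ≤ p ^ e * ∑ i, w i * a i := by
  rw [frobeniusPower_mIdeal] at hx
  obtain ⟨F, hFJ, hFa⟩ := SetLike.not_le_iff_exists.mp hx
  simp only [mem_mIdeal_iff, not_forall, not_exists, not_le] at hFa
  obtain ⟨b, hb, hba⟩ := hFa
  calc x * d ≤ Finsupp.weight w b :=
        mem_weightedOrderIdeal.mp (pow_le_weightedOrderIdeal hJ x hFJ) b hb
    _ = ∑ i, w i * b i := (wdeg_eq_weight w b).symm
    _ ≤ ∑ i, w i * (a i * p ^ e) := Finset.sum_le_sum fun i _ => Nat.mul_le_mul_left _ (hba i).le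
    _ = p ^ e * ∑ i, w i * a i := by
      rw [Finset.mul_sum]
      exact Finset.sum_congr rfl fun i _ => by ring

theorem mul_nuInv_le {d : ℕ} {J : Ideal (MvPolynomial (Fin n) K)}
    (hJ : J ≤ weightedOrderIdeal K w d) (a : Fin n → ℕ) (e : ℕ) :
    d * nuInv p (mIdeal K a) J e ≤ p ^ e * ∑ i, w i * a i := by
  rcases d.eq_zero_or_pos with rfl | hd
  · rw [zero_mul]
    exact Nat.zero_le _
  have hν : nuInv p (mIdeal K a) J e ≤ p ^ e * (∑ i, w i * a i) / d := nuInv_le fun x hx =>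
    (Nat.le_div_iff_mul_le hd).mpr (mul_le_of_not_pow_le_frobeniusPower_mIdeal hJ hx)
  exact (Nat.mul_le_mul_left d hν).trans (Nat.mul_div_le _ d)

theorem le_mul_nuInv_add [Nontrivial K] {d D : ℕ} {J : Ideal (MvPolynomial (Fin n) K)}
    (hd : 0 < d) (hJ : J ≤ weightedOrderIdeal K w d)
    (hJD : ApproximatesWeightedHomogeneous w d D J) {a : Fin n → ℕ} (ha : ∀ i, 0 < a i) (e : ℕ) :
    p ^ e * ∑ i, w i * a i ≤ d * nuInv p (mIdeal K a) J e + (∑ i, w i + D) := by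
  set q := p ^ e
  set A := ∑ i, w i * a i
  set W := ∑ i, w i
  rcases lt_or_ge (q * A) (W + D) with hsmall | hlarge
  · omega
  have hq : 0 < q := pow_pos (expChar_pos K p) e
  have hbound : ∀ x, ¬ J ^ x ≤ frobeniusPower p e (mIdeal K a) → x ≤ q * A := fun x hx =>
    (Nat.le_mul_of_pos_right x hd).trans (mul_le_of_not_pow_le_frobeniusPower_mIdeal hJ hx)
  set b : Fin n →₀ ℕ := Finsupp.equivFunOnFinite.symm fun i => a i * q - 1
  have hbi : ∀ i, b i = a i * q - 1 := fun i => rfl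
  have hb : Finsupp.weight w b + W = q * A := by
    rw [← wdeg_eq_weight, wdeg, ← Finset.sum_add_distrib, Finset.mul_sum]
    refine Finset.sum_congr rfl fun i _ => ?_
    rw [hbi, ← Nat.mul_add_one, Nat.sub_add_cancel (Nat.mul_pos (ha i) hq)]
    ring
  set N := (q * A - (W + D)) / d + 1
  have hN : q * A - (W + D) < N * d := by
    rw [add_mul, one_mul]
    exact Nat.lt_div_mul_add hd
  obtain ⟨G, hGJ, hGb⟩ := hJD N _ (monomial b 1) (isWeightedHomogeneous_monomial _ _ _ rfl) (by
    have := Nat.div_mul_le_self (q * A - (W + D)) d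
    rw [add_mul, one_mul]
    omega)
  have hGcoeff : coeff b G = 1 := by
    have h := coeff_eq_zero_of_mem_weightedOrderIdeal hGb (lt_add_one _)
    rwa [coeff_sub, coeff_monomial, if_pos rfl, sub_eq_zero] at h
  have hGa : G ∉ mIdeal K fun i => a i * q :=
    notMem_mIdeal_of_coeff_ne_zero (b := b) (by simp [hGcoeff]) fun i => by
      have := Nat.mul_pos (ha i) hq
      rw [hbi]
      omega
  have hNν : N ≤ nuInv p (mIdeal K a) J e :=
    le_nuInv hbound fun hle => hGa (frobeniusPower_mIdeal (K := K) p e a ▸ hle hGJ)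
  have hNd := Nat.mul_le_mul_right d hNν
  rw [mul_comm d]
  omega

theorem eq_div_of_tendsto_nuInv [Nontrivial K] {d D : ℕ} {J : Ideal (MvPolynomial (Fin n) K)}
    (hp : 1 < p) (hd : 0 < d) (hJ : J ≤ weightedOrderIdeal K w d)
    (hJD : ApproximatesWeightedHomogeneous w d D J) {a : Fin n → ℕ} (ha : ∀ i, 0 < a i) {c : ℝ}
    (hc : Tendsto (fun e => (nuInv p (mIdeal K a) J e : ℝ) / p ^ e) atTop (𝓝 c)) :
    c = ((∑ i, w i * a i : ℕ) : ℝ) / d :=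
  eq_div_of_tendsto_of_mul_le hp hd (mul_nuInv_le hJ a) (le_mul_nuInv_add hd hJ hJD ha) hc

end PolynomialRing

theorem fThreshold_eq_of_mPrimary_general (p : ℕ) [Fact p.Prime] (K : Type*) [Field K]
    [CharP K p] (n : ℕ) (w : Fin n → ℕ) (hw : ∀ i, 0 < w i)
    (m l : ℕ) (f g : Fin m → MvPolynomial (Fin n) K) (h : Fin l → MvPolynomial (Fin n) K)
    (I I₀ : Ideal (MvPolynomial (Fin n) K))
    (hI : I = Ideal.span (Set.range (fun i => f i + g i) ∪ Set.range h))
    (hI₀ : I₀ = Ideal.span (Set.range f))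
    (hIm : I ≤ mMax K)
    (d₀ : ℕ)
    (hWH : ∀ i, ∀ a ∈ (f i).support, wdeg w a = d₀)
    (hradical : I₀.radical = mMax K)
    (hg : ∀ i, g i ≠ 0 → d₀ < wmd w (g i))
    (hh : ∀ j, h j ≠ 0 → d₀ < wmd w (h j))
    (a : Fin n → ℕ) (ha : ∀ i, 0 < a i)
    (c c₀ : ℝ)
    (hc : Tendsto (fun e : ℕ => (nuInv p (mIdeal K a) I e : ℝ) / (p : ℝ) ^ e)
      atTop (nhds c))
    (hc₀ : Tendsto (fun e : ℕ => (nuInv p (mIdeal K a) I₀ e : ℝ) / (p : ℝ) ^ e)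
      atTop (nhds c₀)) :
    c = ((∑ i, w i * a i : ℕ) : ℝ) / (d₀ : ℝ) ∧
    c₀ = ((∑ i, w i * a i : ℕ) : ℝ) / (d₀ : ℝ) := by
  have hp : 1 < p := (Fact.out : p.Prime).one_lt
  subst hI hI₀
  rcases Nat.eq_zero_or_pos n with rfl | hn
  · have hzero : ∀ J ≤ mMax K, ∀ e, nuInv p (mIdeal K a) J e = 0 := fun J hJ e =>
      nuInv_eq_zero_of_le (hJ.trans (by simp [mMax]))
    simp only [hzero _ hIm, hzero _ (hradical ▸ Ideal.le_radical), CharP.cast_eq_zero, zero_div]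
      at hc hc₀
    simp [tendsto_nhds_unique hc tendsto_const_nhds, tendsto_nhds_unique hc₀ tendsto_const_nhds]
  have : Nonempty (Fin n) := ⟨⟨0, hn⟩⟩
  have hf : ∀ i, IsWeightedHomogeneous w (f i) d₀ := fun i b hb =>
    wdeg_eq_weight w b ▸ hWH i b (mem_support_iff.mpr hb)
  have hd₀ : 0 < d₀ := pos_of_radical_span_eq_idealOfVars hw hf hradical
  obtain ⟨D, hD⟩ := exists_weightedOrderIdeal_le_of_radical_eq w hradical
  have hD' : weightedOrderIdeal K w (D + d₀) ≤ Ideal.span (Set.range f) :=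
    (weightedOrderIdeal_antitone (Nat.le_add_right D d₀)).trans hD
  have hg' : ∀ i, g i ∈ weightedOrderIdeal K w (d₀ + 1) := fun i =>
    mem_weightedOrderIdeal_of_le_wmd (hg i)
  have hfg : ∀ i, f i + g i ∈ weightedOrderIdeal K w d₀ := fun i =>
    add_mem (hf i).mem_weightedOrderIdeal (weightedOrderIdeal_antitone d₀.le_succ (hg' i))
  have hh : ∀ j, h j ∈ weightedOrderIdeal K w d₀ := fun j =>
    weightedOrderIdeal_antitone d₀.le_succ (mem_weightedOrderIdeal_of_le_wmd (hh j))
  refine ⟨eq_div_of_tendsto_nuInv (D := D + d₀) hp hd₀ ?_ ?_ ha hc,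
    eq_div_of_tendsto_nuInv (D := D + d₀) hp hd₀ ?_ ?_ ha hc₀⟩
  · exact Ideal.span_le.mpr (Set.union_subset (Set.range_subset_iff.mpr hfg)
      (Set.range_subset_iff.mpr hh))
  · exact (approximatesWeightedHomogeneous_span_add (Nat.le_add_left d₀ D) hf hg' hD').mono
      (Ideal.span_mono Set.subset_union_left)
  · exact Ideal.span_le.mpr (Set.range_subset_iff.mpr fun i => (hf i).mem_weightedOrderIdeal)
  · simpa using approximatesWeightedHomogeneous_span_add (g := 0) (Nat.le_add_left d₀ D) hf
      (fun _ => zero_mem _) hD'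

/-- Let `K` be a perfect field of characteristic `p`, `R = K[x₁,…,xₙ]`.
Let `I = ⟨f₁+g₁,…,f_m+g_m, h₁,…,h_l⟩` and `I₀ = ⟨f₁,…,f_m⟩` be ideals contained in `𝔪`,
where each `fᵢ` is nonzero and weighted homogeneous of type `(w, d₀)`, `I₀` is
`𝔪`-primary, `wmd(gᵢ) > d₀` for every nonzero `gᵢ`, and `wmd(hⱼ) > d₀` for every nonzero
`hⱼ`. Then for every `a ∈ (ℕ⁺)ⁿ` one has `c^{𝔪(a)}(I) = c^{𝔪(a)}(I₀) = w(a)/d₀`. -/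
theorem fThreshold_eq_of_mPrimary (p : ℕ) [Fact p.Prime] (K : Type*) [Field K]
    [CharP K p] [PerfectRing K p] (n : ℕ) (w : Fin n → ℕ) (hw : ∀ i, 0 < w i)
    (m l : ℕ) (f g : Fin m → MvPolynomial (Fin n) K) (h : Fin l → MvPolynomial (Fin n) K)
    (I I₀ : Ideal (MvPolynomial (Fin n) K))
    (hI : I = Ideal.span (Set.range (fun i => f i + g i) ∪ Set.range h))
    (hI₀ : I₀ = Ideal.span (Set.range f))
    (hIm : I ≤ mMax K) (hI₀m : I₀ ≤ mMax K)
    (d₀ : ℕ)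
    (hf : ∀ i, f i ≠ 0)
    (hWH : ∀ i, ∀ a ∈ (f i).support, wdeg w a = d₀)
    (hprimary : I₀.IsPrimary) (hradical : I₀.radical = mMax K)
    (hg : ∀ i, g i ≠ 0 → d₀ < wmd w (g i))
    (hh : ∀ j, h j ≠ 0 → d₀ < wmd w (h j))
    (a : Fin n → ℕ) (ha : ∀ i, 0 < a i)
    (c c₀ : ℝ)
    (hc : Tendsto (fun e : ℕ => (nuInv p (mIdeal K a) I e : ℝ) / (p : ℝ) ^ e)
      atTop (nhds c))
    (hc₀ : Tendsto (fun e : ℕ => (nuInv p (mIdeal K a) I₀ e : ℝ) / (p : ℝ) ^ e)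
      atTop (nhds c₀)) :
    c = ((∑ i, w i * a i : ℕ) : ℝ) / (d₀ : ℝ) ∧
    c₀ = ((∑ i, w i * a i : ℕ) : ℝ) / (d₀ : ℝ) :=
  fThreshold_eq_of_mPrimary_general p K n w hw m l f g h I I₀ hI hI₀ hIm d₀ hWH hradical hg hh a ha
    c c₀ hc hc₀
end
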